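/- arXiv:1501.06423 — 2 statements merged into one kernel-verified Lean document; each statement's English description precedes it below -/
import Mathlib

section
/- Let k₁,k₂>0, K≥2, J(z)=k₁/z¹²−k₂/z⁶ for z>0 and +∞ for z≤0, J_j(z):=J(jz), γ:=(2k₁/k₂)^{1/6}·((Σ_{j=1}^K j^{-12})/(Σ_{j=1}^K j^{-6}))^{1/6}, and c_j:=−jJ'(jγ)/J'(γ) for j=2,…,K. Then for every j=2,…,K there exist η>0 and C>0 such that for all reals z and z_1,…,z_j with Σ_{s=1}^j z_s=jz, Σ_{s=1}^j |z_s−z|+|z−γ|≤η, one has (in ℝ∪{+∞}): J_j(z)+(c_j/j)·Σ_{s=1}^j J_1(z_s) ≥ J_j(z)+c_j J_1(z)+C·Σ_{s=1}^j (z_s−z)². -/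
/-! As `Σ j⁻¹² < Σ j⁻⁶`, we get `γ⁶ < 2k₁/k₂ < (jγ)⁶`, hence `J'(γ) < 0 < J'(jγ)` and `c_j > 0`;
also `J''(γ) > 0`, because `J''(z) > 0` exactly when `z⁶ < 26k₁/(7k₂)`. By continuity of `J''`,
`J - (m/2)·z²` is convex on a ball around `γ` for some `m > 0`, and Jensen's inequality for it at
the mean `z` of the `z_s` gives `Σ J(z_s) - j·J(z) ≥ (m/2)·Σ (z_s - z)²`. Multiplying by `c_j/j`
gives the claim with `C = c_j·m/(2j)`. -/

open Filter Finset Set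

noncomputable section

/-- The Lennard-Jones potential, extended by `+∞` on `(-∞,0]`. -/
def LJ (k₁ k₂ : ℝ) (z : ℝ) : EReal :=
  if 0 < z then ((k₁ / z ^ 12 - k₂ / z ^ 6 : ℝ) : EReal) else ⊤

/-- The real-valued Lennard-Jones formula (used for derivatives on `(0,∞)`). -/
def LJr (k₁ k₂ : ℝ) (z : ℝ) : ℝ := k₁ / z ^ 12 - k₂ / z ^ 6

/-- The unique minimizer `γ` of the Cauchy–Born energy density `J_CB(z)=Σ_{j=1}^K J(jz)`. -/
def gammaLJ (k₁ k₂ : ℝ) (K : ℕ) : ℝ :=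
  (2 * k₁ / k₂) ^ ((1 : ℝ) / 6) *
    ((∑ j ∈ Finset.Icc 1 K, 1 / (j : ℝ) ^ 12) /
      (∑ j ∈ Finset.Icc 1 K, 1 / (j : ℝ) ^ 6)) ^ ((1 : ℝ) / 6)

/-- The splitting coefficients `c_j := -j·J'(jγ)/J'(γ)`, `j = 2,…,K`. -/
def cLJ (k₁ k₂ : ℝ) (K : ℕ) (j : ℕ) : ℝ :=
  -((j : ℝ) * deriv (LJr k₁ k₂) ((j : ℝ) * gammaLJ k₁ k₂ K)) /
    deriv (LJr k₁ k₂) (gammaLJ k₁ k₂ K)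

open Metric Topology

def LJrDeriv (k₁ k₂ : ℝ) (z : ℝ) : ℝ := (6 * k₂ * z ^ 6 - 12 * k₁) / z ^ 13

def LJrDeriv2 (k₁ k₂ : ℝ) (z : ℝ) : ℝ := (156 * k₁ - 42 * k₂ * z ^ 6) / z ^ 14

theorem hasDerivAt_LJr (k₁ k₂ : ℝ) {z : ℝ} (hz : z ≠ 0) :
    HasDerivAt (LJr k₁ k₂) (LJrDeriv k₁ k₂ z) z := by
  refine (((hasDerivAt_const z k₁).div (hasDerivAt_pow 12 z) (pow_ne_zero _ hz)).sub
    ((hasDerivAt_const z k₂).div (hasDerivAt_pow 6 z) (pow_ne_zero _ hz))).congr_deriv ?_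
  simp only [LJrDeriv]
  field_simp
  ring

theorem hasDerivAt_LJrDeriv (k₁ k₂ : ℝ) {z : ℝ} (hz : z ≠ 0) :
    HasDerivAt (LJrDeriv k₁ k₂) (LJrDeriv2 k₁ k₂ z) z := by
  refine ((((hasDerivAt_pow 6 z).const_mul (6 * k₂)).sub_const (12 * k₁)).div
    (hasDerivAt_pow 13 z) (pow_ne_zero _ hz)).congr_deriv ?_
  simp only [LJrDeriv2]
  field_simp
  ring

theorem continuousAt_LJrDeriv2 (k₁ k₂ : ℝ) {z : ℝ} (hz : z ≠ 0) :
    ContinuousAt (LJrDeriv2 k₁ k₂) z := by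
  unfold LJrDeriv2
  fun_prop (disch := positivity)

@[norm_cast]
theorem EReal.coe_finsetSum {ι : Type*} (t : Finset ι) (f : ι → ℝ) :
    ((∑ i ∈ t, f i : ℝ) : EReal) = ∑ i ∈ t, (f i : EReal) :=
  map_sum (⟨⟨((↑) : ℝ → EReal), EReal.coe_zero⟩, EReal.coe_add⟩ : ℝ →+ EReal) f t

theorem LJ_of_pos (k₁ k₂ : ℝ) {z : ℝ} (hz : 0 < z) : LJ k₁ k₂ z = (LJr k₁ k₂ z : EReal) := by
  rw [LJ, if_pos hz, LJr]

theorem convexOn_sub_mul_sq_of_le_deriv2 {D : Set ℝ} (hD : Convex ℝ D) {f f' f'' : ℝ → ℝ}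
    {m : ℝ} (hf : ∀ x ∈ D, HasDerivAt f (f' x) x)
    (hf' : ∀ x ∈ interior D, HasDerivAt f' (f'' x) x) (hm : ∀ x ∈ interior D, m ≤ f'' x) :
    ConvexOn ℝ D (fun x => f x - m / 2 * x ^ 2) := by
  have hg : ∀ x ∈ D, HasDerivAt (fun x => f x - m / 2 * x ^ 2) (f' x - m * x) x := fun x hx =>
    ((hf x hx).sub ((hasDerivAt_pow 2 x).const_mul (m / 2))).congr_deriv (by ring)
  refine convexOn_of_hasDerivWithinAt2_nonneg hD
    (fun x hx => (hg x hx).continuousAt.continuousWithinAt)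
    (fun x hx => (hg x (interior_subset hx)).hasDerivWithinAt)
    (fun x hx => ((hf' x hx).sub ((hasDerivAt_id x).const_mul m)).hasDerivWithinAt) ?_
  intro x hx
  simpa using hm x hx

theorem exists_convexOn_closedBall_sub_mul_sq {f f' f'' : ℝ → ℝ} {x₀ : ℝ}
    (hf : ∀ᶠ x in 𝓝 x₀, HasDerivAt f (f' x) x ∧ HasDerivAt f' (f'' x) x)
    (hc : ContinuousAt f'' x₀) (hpos : 0 < f'' x₀) :
    ∃ δ > 0, ∃ m > 0, ConvexOn ℝ (closedBall x₀ δ) (fun x => f x - m / 2 * x ^ 2) := by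
  obtain ⟨δ, hδ, hball⟩ := Metric.nhds_basis_closedBall.eventually_iff.1
    (hf.and (hc.eventually (lt_mem_nhds (half_lt_self hpos))))
  refine ⟨δ, hδ, f'' x₀ / 2, half_pos hpos,
    convexOn_sub_mul_sq_of_le_deriv2 (convex_closedBall x₀ δ) (fun x hx => (hball hx).1.1)
      (fun x hx => (hball (interior_subset hx)).1.2)
      (fun x hx => (hball (interior_subset hx)).2.le)⟩

theorem ConvexOn.half_mul_sum_sq_sub_le {ι : Type*} [Fintype ι] [Nonempty ι] {s : Set ℝ}
    {f : ℝ → ℝ} {m : ℝ} (hf : ConvexOn ℝ s (fun x => f x - m / 2 * x ^ 2)) {p : ι → ℝ}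
    (hp : ∀ i, p i ∈ s) {z : ℝ} (hz : ∑ i, p i = Fintype.card ι * z) :
    m / 2 * ∑ i, (p i - z) ^ 2 ≤ ∑ i, f (p i) - Fintype.card ι * f z := by
  set n : ℝ := (Fintype.card ι : ℝ)
  have hn : 0 < n := by positivity
  have hmean : ∑ i, n⁻¹ • p i = z := by
    rw [← Finset.smul_sum, hz, smul_eq_mul, inv_mul_cancel_left₀ hn.ne']
  have hjensen := hf.map_sum_le (fun i _ => inv_nonneg.2 hn.le)
    (by rw [Finset.sum_const, Finset.card_univ, nsmul_eq_mul, mul_inv_cancel₀ hn.ne'])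
    (fun i _ => hp i)
  rw [hmean, ← Finset.smul_sum, smul_eq_mul, le_inv_mul_iff₀ hn, Finset.sum_sub_distrib,
    ← Finset.mul_sum] at hjensen
  have hsq : ∑ i, (p i - z) ^ 2 = ∑ i, p i ^ 2 - n * z ^ 2 := by
    simp only [sub_sq, Finset.sum_add_distrib, Finset.sum_sub_distrib, ← Finset.sum_mul,
      ← Finset.mul_sum, hz, Finset.sum_const, Finset.card_univ, nsmul_eq_mul]
    ring
  rw [hsq]
  linarith

theorem abs_sub_le_of_sum_abs_sub_add_abs_sub_le {ι : Type*} [Fintype ι] {p : ι → ℝ}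
    {z x η : ℝ} (h : ∑ i, |p i - z| + |z - x| ≤ η) (i : ι) : |p i - x| ≤ η :=
  calc |p i - x| ≤ |p i - z| + |z - x| := abs_sub_le _ _ _
    _ ≤ ∑ i, |p i - z| + |z - x| := by
        gcongr
        exact Finset.single_le_sum (fun i _ => abs_nonneg (p i - z)) (Finset.mem_univ i)
    _ ≤ η := h

theorem one_le_sum_Icc_one_div_pow {K : ℕ} (hK : 1 ≤ K) (n : ℕ) :
    1 ≤ ∑ i ∈ Finset.Icc 1 K, 1 / (i : ℝ) ^ n := by
  simpa using Finset.single_le_sum (f := fun i : ℕ => 1 / (i : ℝ) ^ n)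
    (fun i _ => by positivity) (Finset.mem_Icc.2 ⟨le_rfl, hK⟩)

theorem sum_Icc_one_div_pow_lt {K : ℕ} (hK : 2 ≤ K) {a b : ℕ} (hab : a < b) :
    ∑ i ∈ Finset.Icc 1 K, 1 / (i : ℝ) ^ b < ∑ i ∈ Finset.Icc 1 K, 1 / (i : ℝ) ^ a := by
  refine Finset.sum_lt_sum (fun i hi => ?_) ⟨2, Finset.mem_Icc.2 ⟨by norm_num, hK⟩, ?_⟩
  · have hi : (1 : ℝ) ≤ i := by exact_mod_cast (Finset.mem_Icc.1 hi).1
    gcongr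
  · gcongr
    norm_num

theorem sum_Icc_one_div_pow_le_two (K : ℕ) {n : ℕ} (hn : 2 ≤ n) :
    ∑ i ∈ Finset.Icc 1 K, 1 / (i : ℝ) ^ n ≤ 2 := by
  calc ∑ i ∈ Finset.Icc 1 K, 1 / (i : ℝ) ^ n
      ≤ ∑ i ∈ Finset.Ioo 0 (K + 1), ((i : ℝ) ^ 2)⁻¹ := by
        rw [show Finset.Ioo 0 (K + 1) = Finset.Icc 1 K by ext; simp; omega]
        refine Finset.sum_le_sum fun i hi => ?_
        have hi : (1 : ℝ) ≤ i := by exact_mod_cast (Finset.mem_Icc.1 hi).1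
        rw [one_div]
        gcongr
    _ ≤ 2 / ((0 : ℕ) + 1) := sum_Ioo_inv_sq_le 0 (K + 1)
    _ = 2 := by norm_num

theorem gammaLJ_pos {k₁ k₂ : ℝ} (hk₁ : 0 < k₁) (hk₂ : 0 < k₂) {K : ℕ} (hK : 1 ≤ K) :
    0 < gammaLJ k₁ k₂ K := by
  have h12 := one_le_sum_Icc_one_div_pow hK 12
  have h6 := one_le_sum_Icc_one_div_pow hK 6
  unfold gammaLJ
  exact mul_pos (Real.rpow_pos_of_pos (by positivity) _)
    (Real.rpow_pos_of_pos (div_pos (by linarith) (by linarith)) _)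

theorem mul_gammaLJ_pow_six {k₁ k₂ : ℝ} (hk₁ : 0 ≤ k₁) (hk₂ : 0 < k₂) (K : ℕ) :
    k₂ * gammaLJ k₁ k₂ K ^ 6 = 2 * k₁ *
      ((∑ j ∈ Finset.Icc 1 K, 1 / (j : ℝ) ^ 12) / ∑ j ∈ Finset.Icc 1 K, 1 / (j : ℝ) ^ 6) := by
  have hsixth {x : ℝ} (hx : 0 ≤ x) : (x ^ ((1 : ℝ) / 6)) ^ 6 = x := by
    rw [← Real.rpow_mul_natCast hx]
    norm_num
  rw [gammaLJ, mul_pow, hsixth (by positivity), hsixth (by positivity)]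
  field_simp

theorem mul_gammaLJ_pow_six_lt {k₁ k₂ : ℝ} (hk₁ : 0 < k₁) (hk₂ : 0 < k₂) {K : ℕ} (hK : 2 ≤ K) :
    k₂ * gammaLJ k₁ k₂ K ^ 6 < 2 * k₁ := by
  have hlt := sum_Icc_one_div_pow_lt hK (by norm_num : 6 < 12)
  have h6 := one_le_sum_Icc_one_div_pow (by omega : 1 ≤ K) 6
  rw [mul_gammaLJ_pow_six hk₁.le hk₂]
  calc 2 * k₁ * ((∑ j ∈ Finset.Icc 1 K, 1 / (j : ℝ) ^ 12) / ∑ j ∈ Finset.Icc 1 K, 1 / (j : ℝ) ^ 6)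
      < 2 * k₁ * 1 := by gcongr; exact (div_lt_one (by linarith)).2 hlt
    _ = 2 * k₁ := mul_one _

theorem two_mul_lt_mul_mul_gammaLJ_pow_six {k₁ k₂ : ℝ} (hk₁ : 0 < k₁) (hk₂ : 0 < k₂) {K : ℕ}
    (hK : 1 ≤ K) {x : ℝ} (hx : 2 ≤ x) : 2 * k₁ < k₂ * (x * gammaLJ k₁ k₂ K) ^ 6 := by
  have h12 := one_le_sum_Icc_one_div_pow hK 12
  have h6 := one_le_sum_Icc_one_div_pow hK 6
  have h6' := sum_Icc_one_div_pow_le_two K (by norm_num : 2 ≤ 6)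
  have hratio : 1 / 2 ≤ (∑ j ∈ Finset.Icc 1 K, 1 / (j : ℝ) ^ 12) /
      ∑ j ∈ Finset.Icc 1 K, 1 / (j : ℝ) ^ 6 := by
    rw [div_le_div_iff₀ (by norm_num) (by linarith)]
    linarith
  rw [mul_pow, mul_left_comm, mul_gammaLJ_pow_six hk₁.le hk₂]
  calc 2 * k₁ < 2 ^ 6 * (2 * k₁ * (1 / 2)) := by linarith
    _ ≤ x ^ 6 * (2 * k₁ * ((∑ j ∈ Finset.Icc 1 K, 1 / (j : ℝ) ^ 12) /
        ∑ j ∈ Finset.Icc 1 K, 1 / (j : ℝ) ^ 6)) := by gcongr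

theorem LJrDeriv_neg_iff (k₁ k₂ : ℝ) {z : ℝ} (hz : 0 < z) :
    LJrDeriv k₁ k₂ z < 0 ↔ k₂ * z ^ 6 < 2 * k₁ := by
  rw [LJrDeriv, div_lt_iff₀ (by positivity), zero_mul]
  constructor <;> intro h <;> linarith

theorem LJrDeriv_pos_iff (k₁ k₂ : ℝ) {z : ℝ} (hz : 0 < z) :
    0 < LJrDeriv k₁ k₂ z ↔ 2 * k₁ < k₂ * z ^ 6 := by
  rw [LJrDeriv, div_pos_iff_of_pos_right (by positivity)]
  constructor <;> intro h <;> linarith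

theorem LJrDeriv2_pos_iff (k₁ k₂ : ℝ) {z : ℝ} (hz : 0 < z) :
    0 < LJrDeriv2 k₁ k₂ z ↔ 42 * k₂ * z ^ 6 < 156 * k₁ := by
  rw [LJrDeriv2, div_pos_iff_of_pos_right (by positivity)]
  constructor <;> intro h <;> linarith

theorem cLJ_pos {k₁ k₂ : ℝ} (hk₁ : 0 < k₁) (hk₂ : 0 < k₂) {K j : ℕ} (hK : 2 ≤ K) (hj : 2 ≤ j) :
    0 < cLJ k₁ k₂ K j := by
  have hγ := gammaLJ_pos hk₁ hk₂ (by omega : 1 ≤ K)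
  have hj' : (2 : ℝ) ≤ j := by exact_mod_cast hj
  have hjγ : 0 < (j : ℝ) * gammaLJ k₁ k₂ K := by positivity
  have hd₁ : LJrDeriv k₁ k₂ (gammaLJ k₁ k₂ K) < 0 :=
    (LJrDeriv_neg_iff k₁ k₂ hγ).2 (mul_gammaLJ_pow_six_lt hk₁ hk₂ hK)
  have hd₂ : 0 < LJrDeriv k₁ k₂ (j * gammaLJ k₁ k₂ K) :=
    (LJrDeriv_pos_iff k₁ k₂ hjγ).2 (two_mul_lt_mul_mul_gammaLJ_pow_six hk₁ hk₂ (by omega) hj')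
  rw [cLJ, (hasDerivAt_LJr k₁ k₂ hγ.ne').deriv, (hasDerivAt_LJr k₁ k₂ hjγ.ne').deriv]
  exact div_pos_of_neg_of_neg (neg_neg_of_pos (mul_pos (by positivity) hd₂)) hd₁

theorem exists_convexOn_closedBall_gammaLJ {k₁ k₂ : ℝ} (hk₁ : 0 < k₁) (hk₂ : 0 < k₂) {K : ℕ}
    (hK : 2 ≤ K) : ∃ δ > 0, ∃ m > 0,
      ConvexOn ℝ (closedBall (gammaLJ k₁ k₂ K) δ) (fun x => LJr k₁ k₂ x - m / 2 * x ^ 2) := by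
  have hγ := gammaLJ_pos hk₁ hk₂ (by omega : 1 ≤ K)
  have hγ6 := mul_gammaLJ_pow_six_lt hk₁ hk₂ hK
  exact exists_convexOn_closedBall_sub_mul_sq
    ((eventually_ne_nhds hγ.ne').mono fun x hx =>
      ⟨hasDerivAt_LJr k₁ k₂ hx, hasDerivAt_LJrDeriv k₁ k₂ hx⟩)
    (continuousAt_LJrDeriv2 k₁ k₂ hγ.ne') ((LJrDeriv2_pos_iff k₁ k₂ hγ).2 (by linarith))

theorem quadratic_lower_bound_near_gamma_general (k₁ k₂ : ℝ) (hk₁ : 0 < k₁) (hk₂ : 0 < k₂)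
    (K : ℕ) :
    ∀ j ∈ Finset.Icc 2 K, ∃ η > (0 : ℝ), ∃ C > (0 : ℝ),
      ∀ (z : ℝ) (p : Fin j → ℝ), (∑ s, p s) = j * z →
        (∑ s, |p s - z|) + |z - gammaLJ k₁ k₂ K| ≤ η →
        LJ k₁ k₂ ((j : ℝ) * z) + ((cLJ k₁ k₂ K j : ℝ) : EReal) * LJ k₁ k₂ z +
            ((C * ∑ s, (p s - z) ^ 2 : ℝ) : EReal) ≤
          LJ k₁ k₂ ((j : ℝ) * z) +
            ((cLJ k₁ k₂ K j / j : ℝ) : EReal) * ∑ s, LJ k₁ k₂ (p s) := by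
  intro j hj
  obtain ⟨hj2, hjK⟩ := Finset.mem_Icc.1 hj
  have hK : 2 ≤ K := hj2.trans hjK
  set γ := gammaLJ k₁ k₂ K
  have hγ : 0 < γ := gammaLJ_pos hk₁ hk₂ (by omega)
  obtain ⟨δ, hδ, m, hm, hconv⟩ := exists_convexOn_closedBall_gammaLJ hk₁ hk₂ hK
  set c := cLJ k₁ k₂ K j
  have hc : 0 < c := cLJ_pos hk₁ hk₂ hK hj2
  have hjpos : (0 : ℝ) < j := by positivity
  refine ⟨min δ (γ / 2), by positivity, c / j * (m / 2), by positivity, fun z p hsum hclose => ?_⟩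
  have hz : |z - γ| ≤ min δ (γ / 2) := by
    linarith [Finset.sum_nonneg fun s (_ : s ∈ Finset.univ) => abs_nonneg (p s - z)]
  have hp := abs_sub_le_of_sum_abs_sub_add_abs_sub_le hclose
  have hzpos : 0 < z := by linarith [(abs_le.1 hz).1, min_le_right δ (γ / 2)]
  have hppos (s : Fin j) : 0 < p s := by linarith [(abs_le.1 (hp s)).1, min_le_right δ (γ / 2)]
  have : Nonempty (Fin j) := ⟨⟨0, by omega⟩⟩
  have hquad := hconv.half_mul_sum_sq_sub_le
    (fun s => mem_closedBall.2 ((hp s).trans (min_le_left _ _))) (by simpa using hsum)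
  rw [LJ_of_pos k₁ k₂ (by positivity : 0 < (j : ℝ) * z), LJ_of_pos k₁ k₂ hzpos,
    Finset.sum_congr rfl fun s _ => LJ_of_pos k₁ k₂ (hppos s)]
  norm_cast
  simp only [Fintype.card_fin] at hquad
  have hscaled := mul_le_mul_of_nonneg_left hquad (div_pos hc hjpos).le
  rw [mul_sub, show c / j * (j * LJr k₁ k₂ z) = c * LJr k₁ k₂ z by field_simp] at hscaled
  linarith

/-- assumption (vii) for Lennard-Jones potentials: for every `j = 2,…,K`
there exist `η > 0` and `C > 0` such that whenever `Σ z_s = jz` and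
`Σ |z_s - z| + |z - γ| ≤ η`, one has
`J_j(z) + (c_j/j)·Σ J_1(z_s) ≥ J_j(z) + c_j·J_1(z) + C·Σ (z_s - z)²` in `ℝ ∪ {+∞}`. -/
theorem quadratic_lower_bound_near_gamma (k₁ k₂ : ℝ) (hk₁ : 0 < k₁) (hk₂ : 0 < k₂)
    (K : ℕ) (hK : 2 ≤ K) :
    ∀ j ∈ Finset.Icc 2 K, ∃ η > (0 : ℝ), ∃ C > (0 : ℝ),
      ∀ (z : ℝ) (p : Fin j → ℝ), (∑ s, p s) = j * z →
        (∑ s, |p s - z|) + |z - gammaLJ k₁ k₂ K| ≤ η →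
        LJ k₁ k₂ ((j : ℝ) * z) + ((cLJ k₁ k₂ K j : ℝ) : EReal) * LJ k₁ k₂ z +
            ((C * ∑ s, (p s - z) ^ 2 : ℝ) : EReal) ≤
          LJ k₁ k₂ ((j : ℝ) * z) +
            ((cLJ k₁ k₂ K j / j : ℝ) : EReal) * ∑ s, LJ k₁ k₂ (p s) :=
  quadratic_lower_bound_near_gamma_general k₁ k₂ hk₁ hk₂ K
end
end

section
/- Let k₁,k₂>0, K≥2, J(z)=k₁/z¹²−k₂/z⁶ for z>0 and +∞ for z≤0, J_j(z):=J(jz), γ:=(2k₁/k₂)^{1/6}·((Σ_{j=1}^K j^{-12})/(Σ_{j=1}^K j^{-6}))^{1/6}, c_j:=−jJ'(jγ)/J'(γ), and ψ_j(z):=J_j(z)+c_j J_1(z) (j=2,…,K). Then for every j=2,…,K there exist η₁>0 and C₁>0 such that for all z_1,…,z_j∈ℝ with Σ_{s=1}^j |z_s−γ| ≤ η₁, one has (in ℝ∪{+∞}): J_j((1/j)·Σ_{s=1}^j z_s) + (c_j/j)·Σ_{s=1}^j J_1(z_s) − ψ_j(γ) ≥ C₁·Σ_{s=1}^j (z_s−γ)².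 -/
open Filter Finset Set

noncomputable section

/-- `ψ_j(γ) = J_j(γ) + c_j·J_1(γ)` (a real number). -/
def psiGamma (k₁ k₂ : ℝ) (K j : ℕ) : ℝ :=
  LJr k₁ k₂ ((j : ℝ) * gammaLJ k₁ k₂ K) + cLJ k₁ k₂ K j * LJr k₁ k₂ (gammaLJ k₁ k₂ K)

/-!
Write `ψ(z) = J(jz) + c_j J(z)` and let `m` be the mean of the `z_s`. The choice of `c_j` makes
`γ` a critical point of `ψ`. Since `6/π² ≤ (Σ i⁻¹²)/(Σ i⁻⁶) < 1`, the point `γ` lies below the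
minimiser `(2k₁/k₂)^{1/6}` of `J` and every `jγ`, `j ≥ 2`, lies above it, so `J'(γ) < 0 < J'(jγ)`,
hence `c_j > 0`, `J''(γ) > 0`, and `ψ''(γ)·(-J'(γ)) = 432 k₁ k₂ (j⁶ - 1)/(j¹² γ²¹) > 0`.
Near `γ` both `J` and `ψ` therefore have second derivative bounded below by a positive constant:
`Σ J(z_s) ≥ j J(m) + C Σ (z_s - m)²` and `ψ(m) ≥ ψ(γ) + C (m - γ)²`; the two combine through
`Σ (z_s - γ)² = Σ (z_s - m)² + j (m - γ)²`.
-/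

theorem ConvexOn.add_mul_sub_le_of_hasDerivAt {S : Set ℝ} {f : ℝ → ℝ} {f' x y : ℝ}
    (hf : ConvexOn ℝ S f) (hx : x ∈ S) (hy : y ∈ S) (hf' : HasDerivAt f f' x) :
    f x + f' * (y - x) ≤ f y := by
  rcases lt_trichotomy x y with hxy | rfl | hyx
  · have h := hf.le_slope_of_hasDerivAt hx hy hxy hf'
    rw [slope_def_field, le_div_iff₀ (sub_pos.mpr hxy)] at h
    linarith
  · simp
  · have h := hf.slope_le_of_hasDerivAt hy hx hyx hf'
    rw [slope_def_field, div_le_iff₀ (sub_pos.mpr hyx)] at h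
    linarith

theorem add_mul_sub_add_mul_sq_le_of_hasDerivAt2 {D : Set ℝ} (hD : Convex ℝ D)
    {f f' f'' : ℝ → ℝ} {C x y : ℝ}
    (hf : ∀ t ∈ D, HasDerivAt f (f' t) t) (hf' : ∀ t ∈ D, HasDerivAt f' (f'' t) t)
    (hC : ∀ t ∈ D, 2 * C ≤ f'' t) (hx : x ∈ D) (hy : y ∈ D) :
    f x + f' x * (y - x) + C * (y - x) ^ 2 ≤ f y := by
  have hg : ∀ t ∈ D, HasDerivAt (fun t ↦ f t - C * (t - x) ^ 2) (f' t - 2 * C * (t - x)) t :=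
    fun t ht ↦
      ((hf t ht).fun_sub ((((hasDerivAt_id t).sub_const x).pow 2).const_mul C)).congr_deriv
        (by simp; ring)
  have hg' : ∀ t ∈ D, HasDerivAt (fun t ↦ f' t - 2 * C * (t - x)) (f'' t - 2 * C) t :=
    fun t ht ↦
      ((hf' t ht).fun_sub (((hasDerivAt_id t).sub_const x).const_mul (2 * C))).congr_deriv
        (by ring)
  have hconv : ConvexOn ℝ D (fun t ↦ f t - C * (t - x) ^ 2) :=
    convexOn_of_hasDerivWithinAt2_nonneg hD
      (fun t ht ↦ (hg t ht).continuousAt.continuousWithinAt)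
      (fun t ht ↦ (hg t (interior_subset ht)).hasDerivWithinAt)
      (fun t ht ↦ (hg' t (interior_subset ht)).hasDerivWithinAt)
      (fun t ht ↦ sub_nonneg.mpr (hC t (interior_subset ht)))
  have h := hconv.add_mul_sub_le_of_hasDerivAt hx hy (by simpa using hg x hx)
  simp only [sub_self] at h
  linarith

theorem Finset.card_mul_add_mul_sum_sq_le_sum {ι : Type*} (s : Finset ι) (p : ι → ℝ)
    {f : ℝ → ℝ} {m d C : ℝ} (hm : ∑ i ∈ s, (p i - m) = 0)
    (hf : ∀ i ∈ s, f m + d * (p i - m) + C * (p i - m) ^ 2 ≤ f (p i)) :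
    #s * f m + C * ∑ i ∈ s, (p i - m) ^ 2 ≤ ∑ i ∈ s, f (p i) := by
  calc #s * f m + C * ∑ i ∈ s, (p i - m) ^ 2
      = ∑ i ∈ s, (f m + d * (p i - m) + C * (p i - m) ^ 2) := by
        rw [sum_add_distrib, sum_add_distrib, ← mul_sum, ← mul_sum, hm, sum_const,
          nsmul_eq_mul]
        ring
    _ ≤ ∑ i ∈ s, f (p i) := sum_le_sum hf

theorem Finset.sum_sq_sub_eq_sum_sq_sub_add {ι : Type*} (s : Finset ι) (p : ι → ℝ)
    {m : ℝ} (hm : ∑ i ∈ s, (p i - m) = 0) (a : ℝ) :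
    ∑ i ∈ s, (p i - a) ^ 2 = ∑ i ∈ s, (p i - m) ^ 2 + #s * (m - a) ^ 2 := by
  have h (i : ι) : (p i - a) ^ 2 = (p i - m) ^ 2 + 2 * (m - a) * (p i - m) + (m - a) ^ 2 := by
    ring
  simp only [h, sum_add_distrib, ← mul_sum, hm, sum_const, nsmul_eq_mul]
  ring

theorem HasDerivAt.const_mul_comp_mul_add_const_mul {f f' : ℝ → ℝ} {a b c z : ℝ}
    (h₁ : HasDerivAt f (f' (a * z)) (a * z)) (h₂ : HasDerivAt f (f' z) z) :
    HasDerivAt (fun x ↦ b * f (a * x) + c * f x) (b * a * f' (a * z) + c * f' z) z := by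
  have h := ((h₁.comp z ((hasDerivAt_id z).const_mul a)).const_mul b).add (h₂.const_mul c)
  exact h.congr_deriv (by simp; ring)

theorem mem_Icc_of_sum_abs_sub_le {ι : Type*} [Fintype ι] {p : ι → ℝ} {a δ : ℝ}
    (h : ∑ i, |p i - a| ≤ δ) (i : ι) : p i ∈ Icc (a - δ) (a + δ) := by
  have hi : |p i - a| ≤ δ :=
    (Finset.single_le_sum (fun j _ ↦ abs_nonneg (p j - a)) (Finset.mem_univ i)).trans h
  constructor <;> linarith [abs_le.mp hi]

theorem Convex.sum_div_card_mem {D : Set ℝ} (hD : Convex ℝ D) {n : ℕ} (hn : 0 < n)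
    {p : Fin n → ℝ} (hp : ∀ i, p i ∈ D) : (∑ i, p i) / n ∈ D := by
  have hn' : (n : ℝ) ≠ 0 := Nat.cast_ne_zero.mpr hn.ne'
  convert hD.sum_mem (t := Finset.univ) (w := fun _ ↦ (n : ℝ)⁻¹) (fun _ _ ↦ by positivity)
    (by simp [hn']) (fun i _ ↦ hp i) using 1
  simp [div_eq_inv_mul, Finset.mul_sum]

section Cell

variable {f f' f'' : ℝ → ℝ} {n : ℕ} {γ c : ℝ}

theorem cell_energy_quadratic_lower_bound (hn : 0 < n) (hc : 0 < c) {D : Set ℝ}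
    (hD : Convex ℝ D) (hDpos : D ⊆ Ioi 0)
    (hf : ∀ z > 0, HasDerivAt f (f' z) z) (hf' : ∀ z > 0, HasDerivAt f' (f'' z) z)
    (hcrit : n * f' (n * γ) + c * f' γ = 0) {CJ Cψ : ℝ}
    (hCJ : ∀ t ∈ D, 2 * CJ ≤ f'' t) (hCψ : ∀ t ∈ D, 2 * Cψ ≤ n ^ 2 * f'' (n * t) + c * f'' t)
    (hγ : γ ∈ D) {p : Fin n → ℝ} (hp : ∀ s, p s ∈ D) :
    min Cψ (c * CJ) / n * ∑ s, (p s - γ) ^ 2 ≤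
      f (n * ((∑ s, p s) / n)) + c / n * ∑ s, f (p s) - (f (n * γ) + c * f γ) := by
  have hn' : (0 : ℝ) < n := Nat.cast_pos.mpr hn
  set m := (∑ s, p s) / n
  have hmD : m ∈ D := hD.sum_div_card_mem hn hp
  have hm : ∑ s, (p s - m) = 0 := by
    rw [Finset.sum_sub_distrib, Finset.sum_const, Finset.card_univ, Fintype.card_fin,
      nsmul_eq_mul, mul_div_cancel₀ _ hn'.ne', sub_self]
  have hψ (t : ℝ) (ht : t ∈ D) : HasDerivAt (fun x ↦ f (n * x) + c * f x)
      (n * f' (n * t) + c * f' t) t := by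
    have ht' : 0 < t := hDpos ht
    simpa using
      (hf _ (by positivity)).const_mul_comp_mul_add_const_mul (b := 1) (c := c) (hf t ht')
  have hψ' (t : ℝ) (ht : t ∈ D) : HasDerivAt (fun x ↦ n * f' (n * x) + c * f' x)
      (n ^ 2 * f'' (n * t) + c * f'' t) t := by
    have ht' : 0 < t := hDpos ht
    exact ((hf' _ (by positivity)).const_mul_comp_mul_add_const_mul (hf' t ht')).congr_deriv
      (by ring)
  have hJ : n * f m + CJ * ∑ s, (p s - m) ^ 2 ≤ ∑ s, f (p s) := by
    simpa using Finset.card_mul_add_mul_sum_sq_le_sum Finset.univ p hm fun s _ ↦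
      add_mul_sub_add_mul_sq_le_of_hasDerivAt2 hD (fun t ht ↦ hf t (hDpos ht))
        (fun t ht ↦ hf' t (hDpos ht)) hCJ hmD (hp s)
  have hΨ : f (n * γ) + c * f γ + Cψ * (m - γ) ^ 2 ≤ f (n * m) + c * f m := by
    simpa [hcrit] using add_mul_sub_add_mul_sq_le_of_hasDerivAt2 hD hψ hψ' hCψ hγ hmD
  have hV : 0 ≤ ∑ s, (p s - m) ^ 2 := Finset.sum_nonneg fun s _ ↦ sq_nonneg _
  have hmin : min Cψ (c * CJ) / n * ∑ s, (p s - m) ^ 2 ≤ c * CJ / n * ∑ s, (p s - m) ^ 2 := by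
    gcongr
    exact min_le_right _ _
  have hmin' : min Cψ (c * CJ) * (m - γ) ^ 2 ≤ Cψ * (m - γ) ^ 2 := by
    gcongr
    exact min_le_left _ _
  have hcJ : c * f m + c * CJ / n * ∑ s, (p s - m) ^ 2 ≤ c / n * ∑ s, f (p s) := by
    calc c * f m + c * CJ / n * ∑ s, (p s - m) ^ 2
        = c / n * (n * f m + CJ * ∑ s, (p s - m) ^ 2) := by field_simp
      _ ≤ c / n * ∑ s, f (p s) := by gcongr
  rw [Finset.sum_sq_sub_eq_sum_sq_sub_add Finset.univ p hm, Finset.card_univ, Fintype.card_fin,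
    mul_add, ← mul_assoc, div_mul_cancel₀ _ hn'.ne']
  linarith

theorem exists_cell_energy_quadratic_lower_bound
    (hn : 0 < n) (hγ : 0 < γ) (hc : 0 < c)
    (hf : ∀ z > 0, HasDerivAt f (f' z) z) (hf' : ∀ z > 0, HasDerivAt f' (f'' z) z)
    (hf'' : ContinuousOn f'' (Ioi 0)) (hcrit : n * f' (n * γ) + c * f' γ = 0)
    (hJ : 0 < f'' γ) (hψ : 0 < n ^ 2 * f'' (n * γ) + c * f'' γ) :
    ∃ η > 0, ∃ C > 0, ∀ p : Fin n → ℝ, ∑ s, |p s - γ| ≤ η →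
      (∀ s, 0 < p s) ∧ C * ∑ s, (p s - γ) ^ 2 ≤
        f (n * ((∑ s, p s) / n)) + c / n * ∑ s, f (p s) - (f (n * γ) + c * f γ) := by
  have hcont (z : ℝ) (hz : 0 < z) : ContinuousAt f'' z := hf''.continuousAt (Ioi_mem_nhds hz)
  have hψcont : ContinuousAt (fun t ↦ n ^ 2 * f'' (n * t) + c * f'' t) γ :=
    (((hcont _ (by positivity)).comp (continuous_const_mul (n : ℝ)).continuousAt).const_mul
      _).add ((hcont γ hγ).const_mul c)
  obtain ⟨δ, hδ, hD⟩ := (nhds_basis_Icc_pos γ).eventually_iff.mp <|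
    (eventually_gt_nhds hγ).and <|
      ((hcont γ hγ).eventually (eventually_gt_nhds (half_lt_self hJ))).and
        (hψcont.eventually (eventually_gt_nhds (half_lt_self hψ)))
  refine ⟨δ, hδ, min ((n ^ 2 * f'' (n * γ) + c * f'' γ) / 4) (c * (f'' γ / 4)) / n,
    by positivity, fun p hp ↦ ?_⟩
  have hpD := mem_Icc_of_sum_abs_sub_le hp
  exact ⟨fun s ↦ (hD (hpD s)).1,
    cell_energy_quadratic_lower_bound hn hc (convex_Icc _ _) (fun t ht ↦ (hD ht).1) hf hf'
      hcrit (fun t ht ↦ by linarith [(hD ht).2.1]) (fun t ht ↦ by linarith [(hD ht).2.2])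
      ⟨by linarith, by linarith⟩ hpD⟩

end Cell

@[norm_cast]
theorem EReal.coe_finset_sum {ι : Type*} (s : Finset ι) (f : ι → ℝ) :
    ((∑ i ∈ s, f i : ℝ) : EReal) = ∑ i ∈ s, (f i : EReal) :=
  map_sum (⟨⟨Real.toEReal, EReal.coe_zero⟩, EReal.coe_add⟩ : ℝ →+ EReal) f s

namespace LennardJones

open Real

variable {k₁ k₂ : ℝ} {K j : ℕ}

def LJrDeriv (k₁ k₂ z : ℝ) : ℝ := 6 * (k₂ * z ^ 6 - 2 * k₁) / z ^ 13

def LJrDeriv2 (k₁ k₂ z : ℝ) : ℝ := 6 * (26 * k₁ - 7 * k₂ * z ^ 6) / z ^ 14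

theorem hasDerivAt_LJr {z : ℝ} (hz : z ≠ 0) : HasDerivAt (LJr k₁ k₂) (LJrDeriv k₁ k₂ z) z := by
  have h := ((hasDerivAt_const z k₁).div (hasDerivAt_pow 12 z) (pow_ne_zero _ hz)).sub
    ((hasDerivAt_const z k₂).div (hasDerivAt_pow 6 z) (pow_ne_zero _ hz))
  exact h.congr_deriv (by simp only [LJrDeriv]; field_simp; ring)

theorem hasDerivAt_LJrDeriv {z : ℝ} (hz : z ≠ 0) :
    HasDerivAt (LJrDeriv k₁ k₂) (LJrDeriv2 k₁ k₂ z) z := by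
  have h := (((hasDerivAt_pow 6 z).const_mul k₂).sub_const (2 * k₁)).const_mul 6 |>.div
    (hasDerivAt_pow 13 z) (pow_ne_zero _ hz)
  exact h.congr_deriv (by simp only [LJrDeriv2]; field_simp; ring)

theorem continuousOn_LJrDeriv2 : ContinuousOn (LJrDeriv2 k₁ k₂) (Ioi 0) :=
  ContinuousOn.div (by fun_prop) (by fun_prop) fun _ hz ↦ pow_ne_zero _ (ne_of_gt hz)

theorem LJrDeriv_neg {z : ℝ} (hz : 0 < z) (h : k₂ * z ^ 6 < 2 * k₁) : LJrDeriv k₁ k₂ z < 0 :=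
  div_neg_of_neg_of_pos (by linarith) (by positivity)

theorem LJrDeriv_pos {z : ℝ} (hz : 0 < z) (h : 2 * k₁ < k₂ * z ^ 6) : 0 < LJrDeriv k₁ k₂ z :=
  div_pos (by linarith) (by positivity)

theorem LJrDeriv2_pos {z : ℝ} (hz : 0 < z) (h : 7 * k₂ * z ^ 6 < 26 * k₁) :
    0 < LJrDeriv2 k₁ k₂ z :=
  div_pos (by linarith) (by positivity)

theorem sq_mul_LJrDeriv2_add_mul_pos (hk₁ : 0 < k₁) (hk₂ : 0 < k₂) {n z c : ℝ} (hn : 1 < n)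
    (hz : 0 < z) (hneg : LJrDeriv k₁ k₂ z < 0)
    (hcrit : n * LJrDeriv k₁ k₂ (n * z) + c * LJrDeriv k₁ k₂ z = 0) :
    0 < n ^ 2 * LJrDeriv2 k₁ k₂ (n * z) + c * LJrDeriv2 k₁ k₂ z := by
  have hn0 : 0 < n := by linarith
  have key : (n ^ 2 * LJrDeriv2 k₁ k₂ (n * z) + c * LJrDeriv2 k₁ k₂ z) * -LJrDeriv k₁ k₂ z =
      432 * k₁ * k₂ * (n ^ 6 - 1) / (n ^ 12 * z ^ 21) := by
    have hexp : n ^ 2 * LJrDeriv2 k₁ k₂ (n * z) * -LJrDeriv k₁ k₂ z +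
        n * LJrDeriv k₁ k₂ (n * z) * LJrDeriv2 k₁ k₂ z =
          432 * k₁ * k₂ * (n ^ 6 - 1) / (n ^ 12 * z ^ 21) := by
      simp only [LJrDeriv, LJrDeriv2]; field_simp; ring
    linear_combination (-LJrDeriv2 k₁ k₂ z) * hcrit + hexp
  have hn6 : 0 < n ^ 6 - 1 := sub_pos.mpr (one_lt_pow₀ hn (by norm_num))
  have hpos : 0 < 432 * k₁ * k₂ * (n ^ 6 - 1) / (n ^ 12 * z ^ 21) := by positivity
  exact pos_of_mul_pos_left (key ▸ hpos) (by linarith)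

theorem LJ_of_pos {z : ℝ} (hz : 0 < z) : LJ k₁ k₂ z = (LJr k₁ k₂ z : EReal) := if_pos hz

def ratioLJ (K : ℕ) : ℝ :=
  (∑ j ∈ Finset.Icc 1 K, 1 / (j : ℝ) ^ 12) / (∑ j ∈ Finset.Icc 1 K, 1 / (j : ℝ) ^ 6)

theorem one_le_sum_Icc_one_div_pow (hK : 1 ≤ K) (k : ℕ) :
    1 ≤ ∑ j ∈ Finset.Icc 1 K, 1 / (j : ℝ) ^ k := by
  simpa using Finset.single_le_sum (f := fun j : ℕ ↦ 1 / (j : ℝ) ^ k)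
    (fun j _ ↦ by positivity) (Finset.mem_Icc.mpr ⟨le_rfl, hK⟩)

theorem sum_Icc_one_div_pow_six_le (K : ℕ) :
    ∑ j ∈ Finset.Icc 1 K, 1 / (j : ℝ) ^ 6 ≤ π ^ 2 / 6 := by
  calc ∑ j ∈ Finset.Icc 1 K, 1 / (j : ℝ) ^ 6
      ≤ ∑ j ∈ Finset.Icc 1 K, 1 / (j : ℝ) ^ 2 :=
        Finset.sum_le_sum fun j hj ↦ one_div_pow_le_one_div_pow_of_le
          (Nat.one_le_cast.mpr (Finset.mem_Icc.mp hj).1) (by norm_num)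
    _ ≤ π ^ 2 / 6 := sum_le_hasSum _ (fun _ _ ↦ by positivity) hasSum_zeta_two

theorem ratioLJ_lt_one (hK : 2 ≤ K) : ratioLJ K < 1 := by
  have hlt : ∑ j ∈ Finset.Icc 1 K, 1 / (j : ℝ) ^ 12 < ∑ j ∈ Finset.Icc 1 K, 1 / (j : ℝ) ^ 6 :=
    Finset.sum_lt_sum (fun j hj ↦ one_div_pow_le_one_div_pow_of_le
        (Nat.one_le_cast.mpr (Finset.mem_Icc.mp hj).1) (by norm_num))
      ⟨2, Finset.mem_Icc.mpr ⟨by norm_num, hK⟩, by norm_num⟩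
  exact (div_lt_one (by linarith [one_le_sum_Icc_one_div_pow (by omega : 1 ≤ K) 6])).mpr hlt

theorem six_div_pi_sq_le_ratioLJ (hK : 1 ≤ K) : 6 / π ^ 2 ≤ ratioLJ K := by
  have h6 := sum_Icc_one_div_pow_six_le K
  have h12 := one_le_sum_Icc_one_div_pow hK 12
  have hpos : 0 < ∑ j ∈ Finset.Icc 1 K, 1 / (j : ℝ) ^ 6 :=
    lt_of_lt_of_le one_pos (one_le_sum_Icc_one_div_pow hK 6)
  rw [ratioLJ, le_div_iff₀ hpos]
  calc 6 / π ^ 2 * ∑ j ∈ Finset.Icc 1 K, 1 / (j : ℝ) ^ 6 ≤ 6 / π ^ 2 * (π ^ 2 / 6) := by gcongr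
    _ = 1 := by field_simp
    _ ≤ _ := h12

theorem ratioLJ_pos (hK : 1 ≤ K) : 0 < ratioLJ K :=
  lt_of_lt_of_le (by positivity) (six_div_pi_sq_le_ratioLJ hK)

theorem gammaLJ_eq :
    gammaLJ k₁ k₂ K = (2 * k₁ / k₂) ^ ((1 : ℝ) / 6) * ratioLJ K ^ ((1 : ℝ) / 6) := rfl

theorem gammaLJ_pos (hk₁ : 0 < k₁) (hk₂ : 0 < k₂) (hK : 1 ≤ K) : 0 < gammaLJ k₁ k₂ K := by
  rw [gammaLJ_eq]
  exact mul_pos (by positivity) (rpow_pos_of_pos (ratioLJ_pos hK) _)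

theorem mul_gammaLJ_pow_six (hk₁ : 0 < k₁) (hk₂ : 0 < k₂) (hK : 1 ≤ K) :
    k₂ * gammaLJ k₁ k₂ K ^ 6 = 2 * k₁ * ratioLJ K := by
  have hroot {x : ℝ} (hx : 0 ≤ x) : (x ^ ((1 : ℝ) / 6)) ^ 6 = x := by
    rw [one_div]; exact_mod_cast Real.rpow_inv_natCast_pow hx (by norm_num : (6 : ℕ) ≠ 0)
  rw [gammaLJ_eq, mul_pow, hroot (by positivity), hroot (ratioLJ_pos hK).le]
  field_simp

theorem mul_gammaLJ_pow_six_lt (hk₁ : 0 < k₁) (hk₂ : 0 < k₂) (hK : 2 ≤ K) :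
    k₂ * gammaLJ k₁ k₂ K ^ 6 < 2 * k₁ := by
  rw [mul_gammaLJ_pow_six hk₁ hk₂ (by omega)]
  nlinarith [ratioLJ_lt_one hK]

theorem lt_mul_mul_gammaLJ_pow_six (hk₁ : 0 < k₁) (hk₂ : 0 < k₂) (hK : 1 ≤ K) (hj : 2 ≤ j) :
    2 * k₁ < k₂ * (j * gammaLJ k₁ k₂ K) ^ 6 := by
  have hρ : 3 / 8 ≤ ratioLJ K := by
    refine le_trans ?_ (six_div_pi_sq_le_ratioLJ hK)
    rw [le_div_iff₀ (by positivity)]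
    nlinarith [pi_le_four, pi_pos]
  have hj6 : (2 : ℝ) ^ 6 ≤ (j : ℝ) ^ 6 := by gcongr; exact_mod_cast hj
  have h1 : 1 < (j : ℝ) ^ 6 * ratioLJ K := by nlinarith
  rw [mul_pow, mul_left_comm, mul_gammaLJ_pow_six hk₁ hk₂ hK]
  nlinarith

theorem cLJ_eq (hk₁ : 0 < k₁) (hk₂ : 0 < k₂) (hK : 1 ≤ K) (hj : j ≠ 0) :
    cLJ k₁ k₂ K j =
      -(j * LJrDeriv k₁ k₂ (j * gammaLJ k₁ k₂ K)) / LJrDeriv k₁ k₂ (gammaLJ k₁ k₂ K) := by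
  have hγ := gammaLJ_pos hk₁ hk₂ hK
  rw [cLJ, (hasDerivAt_LJr (by positivity)).deriv, (hasDerivAt_LJr hγ.ne').deriv]

theorem cLJ_pos (hk₁ : 0 < k₁) (hk₂ : 0 < k₂) (hK : 2 ≤ K) (hj : 2 ≤ j) : 0 < cLJ k₁ k₂ K j := by
  have hγ := gammaLJ_pos hk₁ hk₂ (by omega : 1 ≤ K)
  rw [cLJ_eq hk₁ hk₂ (by omega) (by omega)]
  refine div_pos_of_neg_of_neg (neg_neg_of_pos (mul_pos (by positivity) ?_))
    (LJrDeriv_neg hγ (mul_gammaLJ_pow_six_lt hk₁ hk₂ hK))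
  exact LJrDeriv_pos (by positivity) (lt_mul_mul_gammaLJ_pow_six hk₁ hk₂ (by omega) hj)

theorem mul_LJrDeriv_add_cLJ_mul_LJrDeriv (hk₁ : 0 < k₁) (hk₂ : 0 < k₂) (hK : 2 ≤ K)
    (hj : j ≠ 0) :
    j * LJrDeriv k₁ k₂ (j * gammaLJ k₁ k₂ K) + cLJ k₁ k₂ K j * LJrDeriv k₁ k₂ (gammaLJ k₁ k₂ K)
      = 0 := by
  have hγ := gammaLJ_pos hk₁ hk₂ (by omega : 1 ≤ K)
  have hne := (LJrDeriv_neg hγ (mul_gammaLJ_pow_six_lt hk₁ hk₂ hK)).ne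
  rw [cLJ_eq hk₁ hk₂ (by omega) hj]
  field_simp
  ring

theorem exists_LJr_cell_quadratic_lower_bound (hk₁ : 0 < k₁) (hk₂ : 0 < k₂) (hK : 2 ≤ K)
    (hj : 2 ≤ j) :
    ∃ η > 0, ∃ C > 0, ∀ p : Fin j → ℝ, ∑ s, |p s - gammaLJ k₁ k₂ K| ≤ η →
      (∀ s, 0 < p s) ∧ C * ∑ s, (p s - gammaLJ k₁ k₂ K) ^ 2 ≤
        LJr k₁ k₂ (j * ((∑ s, p s) / j)) + cLJ k₁ k₂ K j / j * ∑ s, LJr k₁ k₂ (p s) -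
          psiGamma k₁ k₂ K j := by
  have hγ := gammaLJ_pos hk₁ hk₂ (by omega : 1 ≤ K)
  have hγ6 := mul_gammaLJ_pow_six_lt hk₁ hk₂ hK
  have hcrit := mul_LJrDeriv_add_cLJ_mul_LJrDeriv hk₁ hk₂ hK (by omega : j ≠ 0)
  exact exists_cell_energy_quadratic_lower_bound (by omega) hγ (cLJ_pos hk₁ hk₂ hK hj)
    (fun z hz ↦ hasDerivAt_LJr hz.ne') (fun z hz ↦ hasDerivAt_LJrDeriv hz.ne')
    continuousOn_LJrDeriv2 hcrit (LJrDeriv2_pos hγ (by linarith))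
    (sq_mul_LJrDeriv2_add_mul_pos hk₁ hk₂ (by exact_mod_cast hj) hγ (LJrDeriv_neg hγ hγ6) hcrit)

end LennardJones

/-- Lemma 4.1 of the paper: for every `j = 2,…,K` there exist `η₁ > 0`
and `C₁ > 0` such that whenever `Σ_{s=1}^j |z_s - γ| ≤ η₁`, one has (in `ℝ ∪ {+∞}`)
`J_j((1/j)Σ z_s) + (c_j/j)·Σ J_1(z_s) - ψ_j(γ) ≥ C₁·Σ (z_s - γ)²`. -/
theorem quadratic_bound_cell_lemma (k₁ k₂ : ℝ) (hk₁ : 0 < k₁) (hk₂ : 0 < k₂)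
    (K : ℕ) (hK : 2 ≤ K) :
    ∀ j ∈ Finset.Icc 2 K, ∃ η₁ > (0 : ℝ), ∃ C₁ > (0 : ℝ),
      ∀ p : Fin j → ℝ, (∑ s, |p s - gammaLJ k₁ k₂ K|) ≤ η₁ →
        ((C₁ * ∑ s, (p s - gammaLJ k₁ k₂ K) ^ 2 : ℝ) : EReal) ≤
          LJ k₁ k₂ ((j : ℝ) * ((∑ s, p s) / j)) +
            ((cLJ k₁ k₂ K j / j : ℝ) : EReal) * (∑ s, LJ k₁ k₂ (p s)) -
            ((psiGamma k₁ k₂ K j : ℝ) : EReal) := by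
  intro j hj
  have hj2 : 2 ≤ j := (Finset.mem_Icc.mp hj).1
  obtain ⟨η, hη, C, hC, hbound⟩ :=
    LennardJones.exists_LJr_cell_quadratic_lower_bound hk₁ hk₂ hK hj2
  refine ⟨η, hη, C, hC, fun p hp ↦ ?_⟩
  obtain ⟨hp_pos, hle⟩ := hbound p hp
  have hsum : 0 < ∑ s, p s := Finset.sum_pos (fun s _ ↦ hp_pos s) ⟨⟨0, by omega⟩, mem_univ _⟩
  have hmean : 0 < (j : ℝ) * ((∑ s, p s) / j) := by positivity
  rw [LennardJones.LJ_of_pos hmean, sum_congr rfl fun s _ ↦ LennardJones.LJ_of_pos (hp_pos s)]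
  exact_mod_cast hle
end
end
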